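/- arXiv:1903.00108 — 2 statements merged into one kernel-verified Lean document; each statement's English description precedes it below -/
import Mathlib

section
/- Let P₁ and P₂ be orthogonal projections on a finite-dimensional complex Hilbert space with ‖P₁P₂ - P₁∧P₂‖ < 1/2, and set H = P₁ + P₂. Then the smallest nonzero eigenvalue of H is strictly greater than 1/2. -/
open scoped InnerProductSpace

/-- The orthogonal projection onto a submodule, as an operator on the whole space. -/
noncomputable def projOf {E : Type*} [NormedAddCommGroup E] [InnerProductSpace ℂ E]
    [FiniteDimensional ℂ E] (K : Submodule ℂ E) : E →L[ℂ] E :=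
  K.subtypeL.comp (K.orthogonalProjectionOnto)

/-- If `‖P₁P₂ - P₁∧P₂‖ < 1/2`, then every nonzero eigenvalue of `H = P₁ + P₂`
is strictly greater than `1/2`. -/
theorem stmt4 {E : Type*} [NormedAddCommGroup E] [InnerProductSpace ℂ E]
    [FiniteDimensional ℂ E] (P₁ P₂ : E →L[ℂ] E)
    (h₁sa : IsSelfAdjoint P₁) (h₁id : IsIdempotentElem P₁)
    (h₂sa : IsSelfAdjoint P₂) (h₂id : IsIdempotentElem P₂)
    (hnorm : ‖P₁ * P₂ - projOf (LinearMap.range (P₁ : E →ₗ[ℂ] E) ⊓ LinearMap.range (P₂ : E →ₗ[ℂ] E))‖ < 1 / 2)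
    (hker : LinearMap.ker ((P₁ + P₂ : E →L[ℂ] E) : E →ₗ[ℂ] E) ≠ ⊥) :
    ∀ μ : ℝ, Module.End.HasEigenvalue ((P₁ + P₂ : E →L[ℂ] E) : E →ₗ[ℂ] E) (μ : ℂ) →
      μ ≠ 0 → 1 / 2 < μ := by
  intro μ hμ hμ0
  set K : Submodule ℂ E := LinearMap.range (P₁ : E →ₗ[ℂ] E) ⊓ LinearMap.range (P₂ : E →ₗ[ℂ] E) with hK
  set Q : E →L[ℂ] E := projOf K with hQdef
  set D : E →L[ℂ] E := P₁ * P₂ - Q with hDdef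
  have hQsa : IsSelfAdjoint Q := isSelfAdjoint_starProjection K
  -- Q is idempotent
  have hQmem : ∀ y : E, Q y ∈ K := fun y => (K.orthogonalProjectionOnto y).2
  have hQid : IsIdempotentElem Q := by
    ext y
    show Q (Q y) = Q y
    have : Q y = ((⟨Q y, hQmem y⟩ : K) : E) := rfl
    rw [this]
    show ((K.orthogonalProjectionOnto ((⟨Q y, hQmem y⟩ : K) : E) : K) : E) = _
    rw [Submodule.orthogonalProjectionOnto_mem_subspace_eq_self]
  -- fixed point property of self-adjoint idempotents on their range
  have hfix : ∀ (P : E →L[ℂ] E), IsIdempotentElem P → ∀ y ∈ LinearMap.range (P : E →ₗ[ℂ] E), P y = y := by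
    intro P hid y hy
    obtain ⟨z, rfl⟩ := hy
    have := congrArg (fun A : E →L[ℂ] E => A z) hid
    exact this
  have hP₁Q : P₁ * Q = Q := by
    ext y
    exact hfix P₁ h₁id (Q y) ((hQmem y).1)
  have hP₂Q : P₂ * Q = Q := by
    ext y
    exact hfix P₂ h₂id (Q y) ((hQmem y).2)
  have hQP₂ : Q * P₂ = Q := by
    calc Q * P₂ = star (P₂ * Q) := by rw [star_mul, hQsa.star_eq, h₂sa.star_eq]
    _ = star Q := by rw [hP₂Q]
    _ = Q := hQsa.star_eq
  have hP₁D : P₁ * D = D := by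
    rw [hDdef, mul_sub, ← mul_assoc, h₁id.eq, hP₁Q]
  have hDP₂ : D * P₂ = D := by
    rw [hDdef, sub_mul, mul_assoc, h₂id.eq, hQP₂]
  -- symmetry of the operators
  have hmove : ∀ (P : E →L[ℂ] E), IsSelfAdjoint P → ∀ y z : E,
      ⟪P y, z⟫_ℂ = ⟪y, P z⟫_ℂ := by
    intro P hsa y z
    nth_rw 1 [← hsa.adjoint_eq]
    exact ContinuousLinearMap.adjoint_inner_left P z y
  have h₁sym := hmove P₁ h₁sa
  have h₂sym := hmove P₂ h₂sa
  have hQsym := hmove Q hQsa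
  -- inner product of self-adjoint idempotent is norm squared
  have key1 : ∀ (P : E →L[ℂ] E), (∀ y z : E, ⟪P y, z⟫_ℂ = ⟪y, P z⟫_ℂ) → IsIdempotentElem P →
      ∀ y : E, ⟪y, P y⟫_ℂ = ((‖P y‖ ^ 2 : ℝ) : ℂ) := by
    intro P hsym hid y
    have h1 : P y = P (P y) := (congrArg (fun A : E →L[ℂ] E => A y) hid.eq).symm
    calc ⟪y, P y⟫_ℂ = ⟪y, P (P y)⟫_ℂ := by rw [← h1]
    _ = ⟪P y, P y⟫_ℂ := (hsym y (P y)).symm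
    _ = ((‖P y‖ ^ 2 : ℝ) : ℂ) := by
        rw [inner_self_eq_norm_sq_to_K]; norm_cast
  -- the eigenvector
  obtain ⟨x, hxv⟩ := hμ.exists_hasEigenvector
  have hx0 : x ≠ 0 := hxv.right
  have hx : P₁ x + P₂ x = (μ : ℂ) • x := by
    have := hxv.apply_eq_smul
    simpa using this
  set a : ℝ := ‖P₁ x‖ with ha
  set b : ℝ := ‖P₂ x‖ with hb
  set n : ℝ := ‖x‖ with hn
  set ε : ℝ := ‖D‖ with hε
  have hn0 : 0 < n := norm_pos_iff.mpr hx0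
  have hε0 : 0 ≤ ε := norm_nonneg _
  have hεlt : ε < 1 / 2 := hnorm
  -- Step A : μ n² = a² + b²
  have stepA : μ * n ^ 2 = a ^ 2 + b ^ 2 := by
    have h1 : ⟪x, P₁ x + P₂ x⟫_ℂ = ((a ^ 2 + b ^ 2 : ℝ) : ℂ) := by
      rw [inner_add_right, key1 P₁ h₁sym h₁id x, key1 P₂ h₂sym h₂id x]
      push_cast; ring
    have h2 : ⟪x, P₁ x + P₂ x⟫_ℂ = ((μ * n ^ 2 : ℝ) : ℂ) := by
      rw [hx, inner_smul_right, inner_self_eq_norm_sq_to_K, hn]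
      push_cast
      ring_nf
      rfl
    have := h1.symm.trans h2
    exact_mod_cast this.symm
  -- Step C : bound on the cross term
  have crossEq : ⟪P₁ x, P₂ x⟫_ℂ = ⟪P₁ x, D (P₂ x)⟫_ℂ + ⟪x, Q x⟫_ℂ := by
    have e1 : ⟪P₁ x, P₂ x⟫_ℂ = ⟪x, (P₁ * P₂) x⟫_ℂ := by
      rw [ContinuousLinearMap.mul_apply]
      exact h₁sym x (P₂ x)
    have e2 : (P₁ * P₂) x = D x + Q x := by
      rw [hDdef]; simp
    have hcomb : P₁ * (D * P₂) = D := by rw [hDP₂, hP₁D]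
    have e3 : ⟪x, D x⟫_ℂ = ⟪P₁ x, D (P₂ x)⟫_ℂ := by
      have e4 : ⟪x, D x⟫_ℂ = ⟪x, (P₁ * (D * P₂)) x⟫_ℂ := by rw [hcomb]
      have h := (h₁sym x ((D * P₂) x)).symm
      rw [ContinuousLinearMap.mul_apply] at h
      rw [e4, ContinuousLinearMap.mul_apply]
      exact h
    rw [e1, e2, inner_add_right, e3]
  have crossBound : -(ε * a * b) ≤ RCLike.re (⟪P₁ x, P₂ x⟫_ℂ) := by
    rw [crossEq]
    rw [map_add]
    have hQterm : (0 : ℝ) ≤ RCLike.re (⟪x, Q x⟫_ℂ) := by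
      rw [key1 Q hQsym hQid x]
      exact_mod_cast sq_nonneg ‖Q x‖
    have hDterm : -(ε * a * b) ≤ RCLike.re (⟪P₁ x, D (P₂ x)⟫_ℂ) := by
      have h1 : |RCLike.re (⟪P₁ x, D (P₂ x)⟫_ℂ)| ≤ ‖⟪P₁ x, D (P₂ x)⟫_ℂ‖ :=
        RCLike.abs_re_le_norm _
      have h2 : ‖⟪P₁ x, D (P₂ x)⟫_ℂ‖ ≤ a * (ε * b) := by
        calc ‖⟪P₁ x, D (P₂ x)⟫_ℂ‖ ≤ ‖P₁ x‖ * ‖D (P₂ x)‖ := norm_inner_le_norm _ _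
        _ ≤ a * (ε * b) := by
            apply mul_le_mul_of_nonneg_left (D.le_opNorm (P₂ x)) (norm_nonneg _)
      nlinarith [abs_nonneg (RCLike.re (⟪P₁ x, D (P₂ x)⟫_ℂ)),
        neg_abs_le (RCLike.re (⟪P₁ x, D (P₂ x)⟫_ℂ))]
    linarith
  -- Step B : μ² n² = a² + b² + 2 re⟪P₁x, P₂x⟫
  have stepB : μ ^ 2 * n ^ 2 = a ^ 2 + 2 * RCLike.re (⟪P₁ x, P₂ x⟫_ℂ) + b ^ 2 := by
    have h1 : ‖P₁ x + P₂ x‖ ^ 2 = a ^ 2 + 2 * RCLike.re (⟪P₁ x, P₂ x⟫_ℂ) + b ^ 2 := by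
      exact_mod_cast norm_add_sq (𝕜 := ℂ) (P₁ x) (P₂ x)
    have h2 : ‖P₁ x + P₂ x‖ ^ 2 = μ ^ 2 * n ^ 2 := by
      rw [hx, norm_smul, mul_pow, Complex.norm_real, Real.norm_eq_abs, sq_abs, hn]
    rw [← h2, h1]
  -- conclude
  have hab : 2 * a * b ≤ a ^ 2 + b ^ 2 := by nlinarith [sq_nonneg (a - b)]
  have hμpos : 0 < μ := by
    rcases lt_or_ge 0 μ with h | h
    · exact h
    · exfalso
      have hsum : 0 ≤ a ^ 2 + b ^ 2 := by positivity
      have : μ * n ^ 2 ≤ 0 := mul_nonpos_of_nonpos_of_nonneg h (by positivity)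
      have hμ0' : μ * n ^ 2 = 0 := le_antisymm this (stepA ▸ hsum)
      have : μ = 0 := by
        rcases mul_eq_zero.mp hμ0' with h' | h'
        · exact h'
        · exact absurd h' (by positivity)
      exact hμ0 this
  have hineq : (1 - ε) * (μ * n ^ 2) ≤ μ ^ 2 * n ^ 2 := by
    have h1 : a ^ 2 + b ^ 2 - 2 * (ε * a * b) ≤ μ ^ 2 * n ^ 2 := by
      rw [stepB]; linarith [crossBound]
    have h2 : (1 - ε) * (a ^ 2 + b ^ 2) ≤ a ^ 2 + b ^ 2 - 2 * (ε * a * b) := by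
      nlinarith [mul_nonneg hε0 (sq_nonneg (a - b))]
    rw [stepA]
    linarith
  have hfin : 1 - ε ≤ μ := by
    have hpos : 0 < μ * n ^ 2 := by positivity
    have := (mul_le_mul_iff_of_pos_right hpos).mp (by nlinarith [hineq] : (1 - ε) * (μ * n ^ 2) ≤ μ * (μ * n ^ 2))
    exact this
  linarith
end

section
/- Let P₁, P₂ be orthogonal projections on a finite-dimensional complex Hilbert space with ‖P₁P₂‖ < 1/2. Then ‖P₁P₂ - P₁∧P₂‖ < 1/2, and consequently the smallest nonzero eigenvalue of P₁ + P₂ exceeds 1/2. -/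
open scoped InnerProductSpace

set_option maxHeartbeats 800000
set_option synthInstance.maxHeartbeats 200000

/-- If `‖P₁P₂‖ < 1/2` for orthogonal projections `P₁, P₂`, then
`‖P₁P₂ - P₁∧P₂‖ < 1/2` and every nonzero eigenvalue of `P₁ + P₂` exceeds `1/2`. -/
theorem stmt18 {E : Type*} [NormedAddCommGroup E] [InnerProductSpace ℂ E]
    [FiniteDimensional ℂ E] (P₁ P₂ : E →L[ℂ] E)
    (h₁sa : IsSelfAdjoint P₁) (h₁id : IsIdempotentElem P₁)
    (h₂sa : IsSelfAdjoint P₂) (h₂id : IsIdempotentElem P₂)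
    (hnorm : ‖P₁ * P₂‖ < 1 / 2) :
    ‖P₁ * P₂ - projOf (LinearMap.range (P₁ : E →ₗ[ℂ] E) ⊓ LinearMap.range (P₂ : E →ₗ[ℂ] E))‖ < 1 / 2 ∧
    ∀ μ : ℝ, Module.End.HasEigenvalue ((P₁ + P₂ : E →L[ℂ] E) : E →ₗ[ℂ] E) (μ : ℂ) →
      μ ≠ 0 → 1 / 2 < μ := by
  haveI : CompleteSpace E := FiniteDimensional.complete ℂ E
  have hP₁ : ∀ x, P₁ (P₁ x) = P₁ x := by
    intro x
    have := congrArg (fun f : E →L[ℂ] E => f x) h₁id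
    simpa using this
  have hP₂ : ∀ x, P₂ (P₂ x) = P₂ x := by
    intro x
    have := congrArg (fun f : E →L[ℂ] E => f x) h₂id
    simpa using this
  have hbot : (LinearMap.range (P₁ : E →ₗ[ℂ] E) ⊓ LinearMap.range (P₂ : E →ₗ[ℂ] E) : Submodule ℂ E) = ⊥ := by
    rw [Submodule.eq_bot_iff]
    rintro x ⟨⟨y, hy⟩, ⟨z, hz⟩⟩
    have hx1 : P₁ x = x := by rw [← hy]; exact hP₁ y
    have hx2 : P₂ x = x := by rw [← hz]; exact hP₂ z
    have h12 : (P₁ * P₂) x = x := by simp [ContinuousLinearMap.mul_apply, hx2, hx1]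
    have hle : ‖x‖ ≤ ‖P₁ * P₂‖ * ‖x‖ := by
      conv_lhs => rw [← h12]
      exact (P₁ * P₂).le_opNorm x
    by_contra hx0
    have hxpos : 0 < ‖x‖ := norm_pos_iff.mpr hx0
    nlinarith
  have hproj : projOf (LinearMap.range (P₁ : E →ₗ[ℂ] E) ⊓ LinearMap.range (P₂ : E →ₗ[ℂ] E)) = 0 := by
    rw [hbot]
    ext x
    simp [projOf]
  constructor
  · rw [hproj, sub_zero]; exact hnorm
  · intro μ hμ hμ0
    obtain ⟨v, hv⟩ := hμ.exists_hasEigenvector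
    have hv0 : v ≠ 0 := hv.right
    have hveq : P₁ v + P₂ v = (μ : ℂ) • v := by
      simpa using hv.apply_eq_smul
    by_cases hμ1 : μ = 1
    · rw [hμ1]; norm_num
    -- derive the two relations
    have hA : P₁ (P₂ v) = ((μ : ℂ) - 1) • P₁ v := by
      have := congrArg P₁ hveq
      simp only [map_add, map_smul, hP₁] at this
      have h' : P₁ v + P₁ (P₂ v) = (μ : ℂ) • P₁ v := this
      rw [sub_smul, one_smul]
      exact eq_sub_of_add_eq' h'
    have hB : P₂ (P₁ v) = ((μ : ℂ) - 1) • P₂ v := by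
      have := congrArg P₂ hveq
      simp only [map_add, map_smul, hP₂] at this
      have h' : P₂ v + P₂ (P₁ v) = (μ : ℂ) • P₂ v := by
        rw [add_comm]; exact this
      rw [sub_smul, one_smul]
      exact eq_sub_of_add_eq' h'
    by_cases h1 : P₁ v = 0
    · exfalso
      -- then P₂ v = μ • v, and applying P₂ gives μ = μ², so μ ∈ {0,1}
      have h2 : P₂ v = (μ : ℂ) • v := by rw [h1, zero_add] at hveq; exact hveq
      have h3 : (μ : ℂ) • v = ((μ : ℂ) * μ) • v := by
        have := congrArg P₂ h2
        rw [hP₂, map_smul, h2, smul_smul] at this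
        exact this
      have h4 : ((μ : ℂ) - (μ : ℂ) * μ) • v = 0 := by
        rw [sub_smul, h3, sub_self]
      rcases smul_eq_zero.mp h4 with h5 | h5
      · have : (μ : ℂ) * (1 - μ) = 0 := by ring_nf; linear_combination h5
        rcases mul_eq_zero.mp this with h6 | h6
        · exact hμ0 (by exact_mod_cast h6)
        · apply hμ1
          have : (μ : ℂ) = 1 := by linear_combination -h6
          exact_mod_cast this
      · exact hv0 h5
    by_cases h2 : P₂ v = 0
    · exfalso
      have h2' : P₁ v = (μ : ℂ) • v := by rw [h2, add_zero] at hveq; exact hveq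
      have h3 : (μ : ℂ) • v = ((μ : ℂ) * μ) • v := by
        have := congrArg P₁ h2'
        rw [hP₁, map_smul, h2', smul_smul] at this
        exact this
      have h4 : ((μ : ℂ) - (μ : ℂ) * μ) • v = 0 := by
        rw [sub_smul, h3, sub_self]
      rcases smul_eq_zero.mp h4 with h5 | h5
      · have : (μ : ℂ) * (1 - μ) = 0 := by ring_nf; linear_combination h5
        rcases mul_eq_zero.mp this with h6 | h6
        · exact hμ0 (by exact_mod_cast h6)
        · apply hμ1
          have : (μ : ℂ) = 1 := by linear_combination -h6
          exact_mod_cast this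
      · exact hv0 h5
    -- main case: both nonzero
    have hc : ‖(μ : ℂ) - 1‖ = |μ - 1| := by
      rw [show ((μ : ℂ) - 1) = ((μ - 1 : ℝ) : ℂ) by push_cast; ring]
      exact Complex.norm_real _
    have hA' : |μ - 1| * ‖P₁ v‖ ≤ ‖P₁ * P₂‖ * ‖P₂ v‖ := by
      have : ‖P₁ (P₂ v)‖ ≤ ‖P₁ * P₂‖ * ‖P₂ v‖ := by
        have h := (P₁ * P₂).le_opNorm (P₂ v)
        rwa [ContinuousLinearMap.mul_apply, hP₂ v] at h
      rw [hA, norm_smul, hc] at this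
      exact this
    have hB' : |μ - 1| * ‖P₂ v‖ ≤ ‖P₁ * P₂‖ * ‖P₁ v‖ := by
      have : ‖P₂ (P₁ v)‖ ≤ ‖P₂ * P₁‖ * ‖P₁ v‖ := by
        have h := (P₂ * P₁).le_opNorm (P₁ v)
        rwa [ContinuousLinearMap.mul_apply, hP₁ v] at h
      rw [hB, norm_smul, hc] at this
      have hstar : star (P₁ * P₂) = P₂ * P₁ := by
        rw [star_mul, h₂sa.star_eq, h₁sa.star_eq]
      have hnn : ‖P₂ * P₁‖ = ‖P₁ * P₂‖ := by
        rw [← hstar, norm_star]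
      rw [hnn] at this
      exact this
    have hn1 : 0 < ‖P₁ v‖ := norm_pos_iff.mpr h1
    have hn2 : 0 ≤ ‖P₂ v‖ := norm_nonneg _
    have hcn : 0 ≤ ‖P₁ * P₂‖ := norm_nonneg _
    have key : |μ - 1| ^ 2 ≤ ‖P₁ * P₂‖ ^ 2 := by
      nlinarith [abs_nonneg (μ - 1)]
    have h5 : |μ - 1| ≤ ‖P₁ * P₂‖ := by
      nlinarith [abs_nonneg (μ - 1)]
    have := abs_lt.mp (lt_of_le_of_lt h5 hnorm)
    linarith [this.1]
end
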